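/- Define f : [0,1] → 2^[0,1] by f(x) = {x, 1−x}. Then f is upper semicontinuous and has the weak intermediate value property, but does not have the intermediate value property. -/

import Mathlib

open Set Filter Topology

/-- The graph of a set-valued function on `[0,1]`. -/
def SetGraph (f : ℝ → Set ℝ) : Set (ℝ × ℝ) :=
  {p | p.1 ∈ Icc (0:ℝ) 1 ∧ p.2 ∈ f p.1}

/-- Upper semicontinuous set-valued function `[0,1] → 2^[0,1]`:
nonempty compact values inside `[0,1]` and closed graph. -/
def USC (f : ℝ → Set ℝ) : Prop :=
  (∀ x ∈ Icc (0:ℝ) 1, (f x).Nonempty ∧ f x ⊆ Icc (0:ℝ) 1 ∧ IsCompact (f x)) ∧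
    IsClosed (SetGraph f)

/-- The intermediate value property. -/
def IVP (f : ℝ → Set ℝ) : Prop :=
  ∀ x₁ ∈ Icc (0:ℝ) 1, ∀ x₂ ∈ Icc (0:ℝ) 1, x₁ ≠ x₂ →
    ∀ y₁ ∈ f x₁, ∀ y₂ ∈ f x₂, y₁ ≠ y₂ →
      ∀ y ∈ Ioo (min y₁ y₂) (max y₁ y₂),
        ∃ x ∈ Ioo (min x₁ x₂) (max x₁ x₂), y ∈ f x

/-- The weak intermediate value property. -/
def WIVP (f : ℝ → Set ℝ) : Prop :=
  ∀ x₁ ∈ Icc (0:ℝ) 1, ∀ x₂ ∈ Icc (0:ℝ) 1, x₁ ≠ x₂ →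
    ∀ y₁ ∈ f x₁, ∃ y₂ ∈ f x₂,
      ∀ y ∈ Icc (min y₁ y₂) (max y₁ y₂),
        ∃ x ∈ Icc (min x₁ x₂) (max x₁ x₂), y ∈ f x

/-- Weak continuity (from the left and the right) at each interior point. -/
def WeakCont (f : ℝ → Set ℝ) : Prop :=
  ∀ x ∈ Ioo (0:ℝ) 1, ∀ y ∈ f x,
    (∃ u : ℕ → ℝ × ℝ, (∀ k, u k ∈ SetGraph f ∧ (u k).1 < x) ∧
      Tendsto u atTop (𝓝 (x, y))) ∧
    (∃ u : ℕ → ℝ × ℝ, (∀ k, u k ∈ SetGraph f ∧ x < (u k).1) ∧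
      Tendsto u atTop (𝓝 (x, y)))

/-- `f` is almost nonfissile: the nonfissile points of the graph are dense in the graph. -/
def AlmostNonfissile (f : ℝ → Set ℝ) : Prop :=
  SetGraph f ⊆ closure {p | p ∈ SetGraph f ∧ f p.1 = {p.2}}

/-- `f` is light: each fiber `{x : y ∈ f x}` has empty interior in `[0,1]`. -/
def Light (f : ℝ → Set ℝ) : Prop :=
  ∀ y : ℝ, ∀ U : Set ℝ, IsOpen U → (U ∩ Icc (0:ℝ) 1).Nonempty →
    ∃ x ∈ U ∩ Icc (0:ℝ) 1, y ∉ f x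

/-- `f` is surjective onto `[0,1]`. -/
def Surj (f : ℝ → Set ℝ) : Prop :=
  ∀ y ∈ Icc (0:ℝ) 1, ∃ x ∈ Icc (0:ℝ) 1, y ∈ f x

/-- The `n`-fold set-valued composition of `f`. -/
def fIter (f : ℝ → Set ℝ) : ℕ → ℝ → Set ℝ
  | 0, x => {x}
  | n + 1, x => ⋃ z ∈ fIter f n x, f z

/-- The image `f^n[A] = ⋃_{a ∈ A} f^n(a)`. -/
def imIter (f : ℝ → Set ℝ) (n : ℕ) (A : Set ℝ) : Set ℝ :=
  ⋃ a ∈ A, fIter f n a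

/-- The inverse limit of the single bonding function `f` on `[0,1]`. -/
def InvLim (f : ℝ → Set ℝ) : Set (ℕ → ℝ) :=
  {z | (∀ i, z i ∈ Icc (0:ℝ) 1) ∧ ∀ i, z i ∈ f (z (i + 1))}

/-- `X` is irreducible between `x` and `y`: the only subcontinuum of `X`
containing both is `X` itself. -/
def IrreducibleBetween (X : Set (ℕ → ℝ)) (x y : ℕ → ℝ) : Prop :=
  x ∈ X ∧ y ∈ X ∧
    ∀ K ⊆ X, IsCompact K → IsConnected K → x ∈ K → y ∈ K → K = X

/-!
Both branches `x ↦ x` and `x ↦ 1 - x` are continuous self-maps of `[0,1]`, so the graph is a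
union of two closed arcs (upper semicontinuity) and every point of the graph lies on a
continuous selection, along which the ordinary intermediate value theorem gives the weak
property. The strict property fails because the value `1/2`, which lies strictly between
`1 ∈ f(0)` and `1/4 ∈ f(1/4)`, is attained only at `x = 1/2 ∉ (0, 1/4)`.
-/

theorem isClosed_setOf_mem_and_eq {X Y : Type*} [TopologicalSpace X] [TopologicalSpace Y]
    [T2Space Y] {s : Set X} {g : X → Y} (hs : IsClosed s) (hg : ContinuousOn g s) :
    IsClosed {p : X × Y | p.1 ∈ s ∧ p.2 = g p.1} := by
  have hcont : ContinuousOn (fun p : X × Y => (p.2, g p.1)) (s ×ˢ univ) :=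
    continuousOn_snd.prodMk (hg.comp continuousOn_fst fun p hp => hp.1)
  convert hcont.preimage_isClosed_of_isClosed (hs.prod isClosed_univ) isClosed_diagonal using 1
  ext p
  simp

theorem usc_pair {g h : ℝ → ℝ} (hg : ContinuousOn g (Icc 0 1)) (hh : ContinuousOn h (Icc 0 1))
    (hgI : MapsTo g (Icc 0 1) (Icc 0 1)) (hhI : MapsTo h (Icc 0 1) (Icc 0 1)) :
    USC (fun x => ({g x, h x} : Set ℝ)) := by
  refine ⟨fun x hx => ⟨insert_nonempty _ _, ?_, (finite_singleton _).insert _ |>.isCompact⟩, ?_⟩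
  · exact insert_subset (hgI hx) (singleton_subset_iff.2 (hhI hx))
  · have hgraph : SetGraph (fun x => ({g x, h x} : Set ℝ)) =
        {p | p.1 ∈ Icc 0 1 ∧ p.2 = g p.1} ∪ {p | p.1 ∈ Icc 0 1 ∧ p.2 = h p.1} := by
      ext p
      simp only [SetGraph, mem_insert_iff, mem_singleton_iff, mem_union, mem_ofPred_eq, and_or_left]
    rw [hgraph]
    exact (isClosed_setOf_mem_and_eq isClosed_Icc hg).union (isClosed_setOf_mem_and_eq isClosed_Icc hh)

theorem wivp_of_continuous_selection {f : ℝ → Set ℝ}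
    (hsel : ∀ x₁ ∈ Icc (0:ℝ) 1, ∀ y₁ ∈ f x₁, ∃ g : ℝ → ℝ, ContinuousOn g (Icc 0 1) ∧
      g x₁ = y₁ ∧ ∀ x ∈ Icc (0:ℝ) 1, g x ∈ f x) :
    WIVP f := by
  intro x₁ hx₁ x₂ hx₂ _ y₁ hy₁
  obtain ⟨g, hg, rfl, hgf⟩ := hsel x₁ hx₁ y₁ hy₁
  have hsub : uIcc x₁ x₂ ⊆ Icc 0 1 := uIcc_subset_Icc hx₁ hx₂
  refine ⟨g x₂, hgf x₂ hx₂, fun y hy => ?_⟩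
  obtain ⟨x, hx, rfl⟩ := intermediate_value_uIcc (hg.mono hsub) hy
  exact ⟨x, hx, hgf x (hsub hx)⟩

theorem usc_reflect : USC (fun x => ({x, 1 - x} : Set ℝ)) :=
  usc_pair continuousOn_id (continuousOn_const.sub continuousOn_id) (mapsTo_id _)
    fun _ hx => ⟨by linarith [hx.2], by linarith [hx.1]⟩

theorem wivp_reflect : WIVP (fun x => ({x, 1 - x} : Set ℝ)) := by
  refine wivp_of_continuous_selection fun x₁ _ y₁ hy₁ => ?_
  rcases hy₁ with rfl | rfl
  · exact ⟨id, continuousOn_id, rfl, fun x _ => Or.inl rfl⟩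
  · exact ⟨fun x => 1 - x, continuousOn_const.sub continuousOn_id, rfl, fun x _ => Or.inr rfl⟩

theorem not_ivp_reflect : ¬ IVP (fun x => ({x, 1 - x} : Set ℝ)) := by
  intro h
  obtain ⟨x, hx, hmem⟩ := h 0 (by norm_num) (1/4) (by norm_num) (by norm_num)
    1 (by norm_num) (1/4) (by norm_num) (by norm_num) (1/2) (by norm_num)
  have hx_half : x = 1/2 := by
    rcases hmem with h | h
    · exact h.symm
    · linarith [mem_singleton_iff.1 h]
  norm_num [hx_half] at hx

/-- `f(x) = {x, 1-x}` is usc, has the weak IVP, but not the IVP. -/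
theorem stmt10 :
    USC (fun x => ({x, 1 - x} : Set ℝ)) ∧
      WIVP (fun x => ({x, 1 - x} : Set ℝ)) ∧
      ¬ IVP (fun x => ({x, 1 - x} : Set ℝ)) :=
  ⟨usc_reflect, wivp_reflect, not_ivp_reflect⟩
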